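/- arXiv:2602.05803 — 2 statements merged into one kernel-verified Lean document; each statement's English description precedes it below -/
import Mathlib

section
/- Let G be a connected simple undirected graph on vertex set {1,…,N} with N ≥ 3, let L be its Laplacian matrix, and let λ₂ = inf{ (vᵀLv)/(vᵀv) : v ∈ ℝ^N, v ≠ 0, 1ᵀv = 0 }. Let β > 0, let φ be a real N×N matrix with φ_{ij} = 0 whenever {i,j} is not an edge of G or i = j, and define the mask m = (φᵀ − φ)·1. Let x : [0,∞) → ℝ^N be differentiable with γ := sup_{τ ≥ 0} ‖(I − (1/N)·1·1ᵀ)·x'(τ)‖₂ < ∞, and let x̂ : [0,∞) → ℝ^N be differentiable with x̂'(t) = x'(t) − β·L·x̂(t) for all t ≥ 0 and masked initialization x̂(0) = x(0) + m. Then for every agent i, limsup_{t→∞} |x̂_i(t) − (1/N)·Σ_{j=1}^N x_j(t)| ≤ γ/(β·λ₂); that is, the privacy-preserving masked DAC algorithm converges to the same bounded neighborhood of the true average as the conventional DAC algorithm. -/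
/-!
The mask has zero sum and the Laplacian dynamics conserve `∑ᵢ (x̂ᵢ − xᵢ)`, so the deviation
`e = x̂ − avg(x)·1` stays orthogonal to `1` even though its initial value is perturbed. On that
subspace `vᵀLv ≥ λ₂‖v‖²` with `λ₂ > 0` because `G` is connected, and `e' = Px' − βLe` with
`P = I − 11ᵀ/N` gives `(‖e‖²)' ≤ 2γ‖e‖ − 2βλ₂‖e‖²`. Grönwall's inequality, applied to
`√(‖e‖² + ε²)`, makes `‖e‖` eventually smaller than `γ/(βλ₂) + 2ε`.
-/

open Matrix Filter Set Real

theorem eq_of_hasDerivAt_eq_zero_of_nonneg {f : ℝ → ℝ} (hf : ∀ t ≥ 0, HasDerivAt f 0 t)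
    {t : ℝ} (ht : 0 ≤ t) : f t = f 0 :=
  constant_of_has_deriv_right_zero (fun s hs => (hf s hs.1).continuousAt.continuousWithinAt)
    (fun s hs => (hf s hs.1).hasDerivWithinAt) t (right_mem_Icc.2 ht)

theorem eventually_le_add_of_hasDerivAt_le {u u' : ℝ → ℝ} {k b δ : ℝ} (hk : 0 < k) (hδ : 0 < δ)
    (hu : ∀ t ≥ 0, HasDerivAt u (u' t) t) (hu' : ∀ t ≥ 0, u' t ≤ -k * u t + b) :
    ∀ᶠ t in atTop, u t ≤ b / k + δ := by
  have hgronwall : ∀ t ≥ 0, u t ≤ (u 0 - b / k) * exp (-k * t) + b / k := by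
    intro t ht
    have h := le_gronwallBound_of_liminf_deriv_right_le (δ := u 0) (a := 0)
      (fun s hs => (hu s hs.1).continuousAt.continuousWithinAt)
      (fun s hs r hr => (hu s hs.1).hasDerivWithinAt.liminf_right_slope_le hr)
      le_rfl (fun s hs => hu' s hs.1) t (right_mem_Icc.2 ht)
    rw [gronwallBound_of_K_ne_0 (neg_ne_zero.2 hk.ne'), sub_zero] at h
    convert h using 1
    field_simp
    ring
  have hdecay : Tendsto (fun t => (u 0 - b / k) * exp (-k * t)) atTop (nhds 0) := by
    simpa using (tendsto_exp_atBot.comp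
      (tendsto_id.const_mul_atTop_of_neg (neg_lt_zero.2 hk))).const_mul (u 0 - b / k)
  filter_upwards [hdecay.eventually (eventually_lt_nhds hδ), eventually_ge_atTop 0]
    with t hsmall ht
  linarith [hgronwall t ht]

theorem eventually_sqrt_le_add_of_hasDerivAt_le {W W' : ℝ → ℝ} {γ k δ : ℝ} (hγ : 0 ≤ γ)
    (hk : 0 < k) (hδ : 0 < δ) (hW : ∀ t, 0 ≤ W t) (hW' : ∀ t ≥ 0, HasDerivAt W (W' t) t)
    (hW'le : ∀ t ≥ 0, W' t ≤ 2 * γ * √(W t) - 2 * k * W t) :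
    ∀ᶠ t in atTop, √(W t) ≤ γ / k + δ := by
  -- `√W` need not be differentiable where `W = 0`, so we bound the smooth `√(W + ε²)` instead.
  set ε := δ / 2
  have hε : 0 < ε := half_pos hδ
  set u : ℝ → ℝ := fun t => √(W t + ε ^ 2)
  have hWε : ∀ t, 0 < W t + ε ^ 2 := fun t => by nlinarith [hW t]
  have hu_sq : ∀ t, u t ^ 2 = W t + ε ^ 2 := fun t => sq_sqrt (hWε t).le
  have hsqrt_le : ∀ t, √(W t) ≤ u t := fun t => sqrt_le_sqrt (by nlinarith)
  have hε_le : ∀ t, ε ≤ u t := fun t => le_sqrt_of_sq_le (by nlinarith [hW t])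
  have hu : ∀ t ≥ 0, HasDerivAt u (W' t / (2 * u t)) t := fun t ht =>
    ((hW' t ht).add_const _).sqrt (hWε t).ne'
  have hu' : ∀ t ≥ 0, W' t / (2 * u t) ≤ -k * u t + (γ + k * ε) := by
    intro t ht
    have hu_pos : 0 < u t := hε.trans_le (hε_le t)
    rw [div_le_iff₀ (by positivity)]
    nlinarith [hW'le t ht, hu_sq t, mul_nonneg hγ (sub_nonneg.2 (hsqrt_le t)),
      mul_nonneg (mul_nonneg hk.le hε.le) (sub_nonneg.2 (hε_le t))]
  filter_upwards [eventually_le_add_of_hasDerivAt_le hk hε hu hu'] with t ht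
  calc √(W t) ≤ u t := hsqrt_le t
    _ ≤ (γ + k * ε) / k + ε := ht
    _ = γ / k + δ := by field_simp; ring

theorem HasDerivAt.sum_sq {V : Type*} [Fintype V] {f : ℝ → V → ℝ} {f' : V → ℝ} {t : ℝ}
    (hf : HasDerivAt f f' t) : HasDerivAt (fun s => ∑ i, f s i ^ 2) (2 * (f t ⬝ᵥ f')) t := by
  refine (HasDerivAt.fun_sum (u := .univ) fun i _ =>
    (hasDerivAt_pi.1 hf i).fun_pow 2).congr_deriv ?_
  simp [dotProduct, Finset.mul_sum, mul_assoc]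

theorem IsClosed.exists_pos_mul_norm_sq_le {E : Type*} [NormedAddCommGroup E] [NormedSpace ℝ E]
    [ProperSpace E] {S : Set E} (hS : IsClosed S) (hS_smul : ∀ (c : ℝ), ∀ v ∈ S, c • v ∈ S)
    {q : E → ℝ} (hq : Continuous q) (hq_smul : ∀ (c : ℝ) v, q (c • v) = c ^ 2 * q v)
    (hq_pos : ∀ v ∈ S, v ≠ 0 → 0 < q v) :
    ∃ c > 0, ∀ v ∈ S, c * ‖v‖ ^ 2 ≤ q v := by
  obtain ⟨c, hc, hmin⟩ :=
    ((isCompact_sphere 0 1).inter_left hS).exists_forall_le' hq.continuousOn fun v hv =>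
      hq_pos v hv.1 (ne_zero_of_mem_unit_sphere ⟨v, hv.2⟩)
  refine ⟨c, hc, fun v hv => ?_⟩
  rcases eq_or_ne v 0 with rfl | hv0
  · have hq0 : q 0 = 0 := by simpa using hq_smul 0 0
    simp [hq0]
  have hunit : ‖v‖⁻¹ • v ∈ S ∩ Metric.sphere 0 1 :=
    ⟨hS_smul _ v hv, by simp [norm_smul, hv0]⟩
  calc c * ‖v‖ ^ 2 ≤ q (‖v‖⁻¹ • v) * ‖v‖ ^ 2 := by gcongr; exact hmin _ hunit
    _ = q v := by rw [hq_smul, inv_pow]; field_simp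

namespace SimpleGraph

variable {V : Type*} [Fintype V] [DecidableEq V] (G : SimpleGraph V) [DecidableRel G.Adj]

theorem lapMatrix_mulVec_sub_const {R : Type*} [CommRing R] (v : V → R) (c : R) :
    G.lapMatrix R *ᵥ (v - fun _ => c) = G.lapMatrix R *ᵥ v := by
  rw [mulVec_sub, show (fun _ : V => c) = c • fun _ => 1 by ext; simp, mulVec_smul,
    lapMatrix_mulVec_const_eq_zero, smul_zero, sub_zero]

theorem sum_lapMatrix_mulVec {R : Type*} [CommRing R] (v : V → R) :
    ∑ i, (G.lapMatrix R *ᵥ v) i = 0 := by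
  rw [← one_dotProduct, dotProduct_mulVec, ← mulVec_transpose, (G.isSymm_lapMatrix R).eq]
  simp [Pi.one_def, lapMatrix_mulVec_const_eq_zero]

variable {G}

theorem Connected.dotProduct_lapMatrix_mulVec_pos (hG : G.Connected) {v : V → ℝ}
    (hv : v ≠ 0) (hsum : ∑ i, v i = 0) : 0 < v ⬝ᵥ (G.lapMatrix ℝ *ᵥ v) := by
  refine ((posSemidef_lapMatrix ℝ G).dotProduct_mulVec_nonneg v).lt_of_ne' fun h => hv ?_
  have hconst : ∀ i j, v i = v j := fun i j =>
    (lapMatrix_toLinearMap₂'_apply'_eq_zero_iff_forall_reachable G v).1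
      (by rwa [toLinearMap₂'_apply']) i j (hG.preconnected i j)
  obtain ⟨i₀⟩ := hG.nonempty
  have hi₀ : v i₀ = 0 := by
    simpa [← hconst i₀, (Fintype.card_pos_iff.2 ⟨i₀⟩).ne'] using hsum
  ext i
  rw [hconst i i₀, hi₀, Pi.zero_apply]

theorem Connected.exists_pos_mul_dotProduct_le (hG : G.Connected) :
    ∃ c > 0, ∀ v : V → ℝ, ∑ i, v i = 0 → c * (v ⬝ᵥ v) ≤ v ⬝ᵥ (G.lapMatrix ℝ *ᵥ v) := by
  obtain ⟨c, hc, hle⟩ := IsClosed.exists_pos_mul_norm_sq_le (E := EuclideanSpace ℝ V)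
    (S := {w | ∑ i, w i = 0}) (q := fun w => w.ofLp ⬝ᵥ (G.lapMatrix ℝ *ᵥ w.ofLp))
    (isClosed_eq (by fun_prop) continuous_const)
    (fun c w hw => by simpa [← Finset.mul_sum] using Or.inr hw)
    (by fun_prop) (fun c w => by simp [mulVec_smul]; ring)
    (fun w hw hw0 => hG.dotProduct_lapMatrix_mulVec_pos (by simpa using hw0) hw)
  refine ⟨c, hc, fun v hv => ?_⟩
  convert hle (WithLp.toLp 2 v) hv using 2
  rw [EuclideanSpace.norm_sq_eq]
  simp [dotProduct, sq]

end SimpleGraph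

theorem Matrix.dotProduct_self_pos {V : Type*} [Fintype V] {v : V → ℝ} (hv : v ≠ 0) :
    0 < v ⬝ᵥ v := by
  simpa using dotProduct_star_self_pos_iff.2 hv

theorem Matrix.sum_transpose_sub_mulVec_const {V R : Type*} [Fintype V] [CommRing R]
    (A : Matrix V V R) : ∑ i, ((Aᵀ - A) *ᵥ fun _ => 1) i = 0 := by
  change ∑ i, ((Aᵀ - A) *ᵥ 1) i = 0
  rw [← one_dotProduct, sub_mulVec, dotProduct_sub, mulVec_transpose, dotProduct_comm,
    ← dotProduct_mulVec, sub_self]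

section Rayleigh

variable {V : Type*} [Fintype V]

/-- The `λ₂` of the paper. -/
noncomputable def zeroSumRayleighInf (M : Matrix V V ℝ) : ℝ :=
  sInf {r : ℝ | ∃ v : V → ℝ, v ≠ 0 ∧ (∑ i, v i) = 0 ∧ r = (v ⬝ᵥ (M *ᵥ v)) / (v ⬝ᵥ v)}

variable {M : Matrix V V ℝ} {c : ℝ}

theorem le_zeroSumRayleighInf [Nontrivial V]
    (hc : ∀ v : V → ℝ, ∑ i, v i = 0 → c * (v ⬝ᵥ v) ≤ v ⬝ᵥ (M *ᵥ v)) :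
    c ≤ zeroSumRayleighInf M := by
  classical
  obtain ⟨a, b, hab⟩ := exists_pair_ne V
  refine le_csInf ⟨_, Pi.single a 1 - Pi.single b 1, ?_, ?_, rfl⟩ ?_
  · intro h
    simpa [hab] using congrFun h a
  · simp
  · rintro r ⟨v, hv, hsum, rfl⟩
    exact (le_div_iff₀ (dotProduct_self_pos hv)).2 (hc v hsum)

theorem zeroSumRayleighInf_mul_dotProduct_le
    (hc : ∀ v : V → ℝ, ∑ i, v i = 0 → c * (v ⬝ᵥ v) ≤ v ⬝ᵥ (M *ᵥ v))
    {v : V → ℝ} (hv : ∑ i, v i = 0) : zeroSumRayleighInf M * (v ⬝ᵥ v) ≤ v ⬝ᵥ (M *ᵥ v) := by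
  rcases eq_or_ne v 0 with rfl | hv0
  · simp
  have hpos := dotProduct_self_pos hv0
  refine (le_div_iff₀ hpos).1 (csInf_le ⟨c, ?_⟩ ⟨v, hv0, hv, rfl⟩)
  rintro r ⟨w, hw, hsum, rfl⟩
  exact (le_div_iff₀ (dotProduct_self_pos hw)).2 (hc w hsum)

end Rayleigh

section Dynamics

noncomputable def centeringMatrix (V : Type*) [Fintype V] [DecidableEq V] : Matrix V V ℝ :=
  1 - (Fintype.card V : ℝ)⁻¹ • of fun _ _ => 1

variable {V : Type*} [Fintype V] [DecidableEq V]

theorem centeringMatrix_mulVec (v : V → ℝ) :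
    centeringMatrix V *ᵥ v = v - fun _ => (∑ j, v j) / Fintype.card V := by
  rw [centeringMatrix, sub_mulVec, one_mulVec, smul_mulVec]
  ext i
  simp [mulVec, dotProduct, div_eq_inv_mul]

noncomputable def averageDeviation (x xhat : ℝ → V → ℝ) (t : ℝ) : V → ℝ :=
  xhat t - fun _ => (∑ j, x t j) / Fintype.card V

variable {G : SimpleGraph V} [DecidableRel G.Adj] {β : ℝ} {x xhat : ℝ → V → ℝ}

theorem hasDerivAt_averageDeviation (hx : Differentiable ℝ x)
    (hode : ∀ t ≥ 0, HasDerivAt xhat (deriv x t - β • (G.lapMatrix ℝ *ᵥ xhat t)) t)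
    {t : ℝ} (ht : 0 ≤ t) :
    HasDerivAt (averageDeviation x xhat) (centeringMatrix V *ᵥ deriv x t -
      β • (G.lapMatrix ℝ *ᵥ averageDeviation x xhat t)) t := by
  have havg : HasDerivAt (fun s => fun _ : V => (∑ j, x s j) / Fintype.card V)
      (fun _ => (∑ j, deriv x t j) / Fintype.card V) t :=
    hasDerivAt_pi.2 fun _ =>
      (HasDerivAt.fun_sum fun j _ => hasDerivAt_pi.1 (hx t).hasDerivAt j).div_const _
  refine ((hode t ht).sub havg).congr_deriv ?_
  rw [centeringMatrix_mulVec, averageDeviation, G.lapMatrix_mulVec_sub_const]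
  abel

theorem sum_averageDeviation_eq_zero (hx : Differentiable ℝ x)
    (hode : ∀ t ≥ 0, HasDerivAt xhat (deriv x t - β • (G.lapMatrix ℝ *ᵥ xhat t)) t)
    (hinit : ∑ i, xhat 0 i = ∑ i, x 0 i) {t : ℝ} (ht : 0 ≤ t) :
    ∑ i, averageDeviation x xhat t i = 0 := by
  have hconst : ∀ s ≥ 0, HasDerivAt (fun s => ∑ i, (xhat s - x s) i) 0 s := fun s hs => by
    simpa [Finset.sum_sub_distrib, ← Finset.mul_sum, G.sum_lapMatrix_mulVec] using
      HasDerivAt.fun_sum (u := .univ) fun i _ =>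
        hasDerivAt_pi.1 ((hode s hs).sub (hx s).hasDerivAt) i
  have hdiff := eq_of_hasDerivAt_eq_zero_of_nonneg hconst ht
  rcases isEmpty_or_nonempty V with hV | hV
  · simp
  simp only [Pi.sub_apply, Finset.sum_sub_distrib, hinit, sub_self] at hdiff
  simp [averageDeviation, Finset.sum_sub_distrib, mul_div_cancel₀, hdiff]

theorem SimpleGraph.Connected.limsup_abs_averageDeviation_le [Nontrivial V] (hG : G.Connected)
    (hβ : 0 < β) (hx : Differentiable ℝ x) {γ : ℝ}
    (hγ : ∀ τ ≥ 0, √(∑ i, (centeringMatrix V *ᵥ deriv x τ) i ^ 2) ≤ γ)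
    (hode : ∀ t ≥ 0, HasDerivAt xhat (deriv x t - β • (G.lapMatrix ℝ *ᵥ xhat t)) t)
    (hinit : ∑ i, xhat 0 i = ∑ i, x 0 i) (i : V) :
    limsup (fun t => |averageDeviation x xhat t i|) atTop ≤
      γ / (β * zeroSumRayleighInf (G.lapMatrix ℝ)) := by
  obtain ⟨c, hc, hgap⟩ := hG.exists_pos_mul_dotProduct_le
  set lam2 := zeroSumRayleighInf (G.lapMatrix ℝ)
  have hlam2 : 0 < lam2 := hc.trans_le (le_zeroSumRayleighInf hgap)
  set e := averageDeviation x xhat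
  set W : ℝ → ℝ := fun t => ∑ j, e t j ^ 2
  have hW' : ∀ t ≥ 0, 2 * (e t ⬝ᵥ (centeringMatrix V *ᵥ deriv x t -
      β • (G.lapMatrix ℝ *ᵥ e t))) ≤ 2 * γ * √(W t) - 2 * (β * lam2) * W t := by
    intro t ht
    have hee : e t ⬝ᵥ e t = W t := by simp [W, dotProduct, sq]
    have hcs : e t ⬝ᵥ (centeringMatrix V *ᵥ deriv x t) ≤ √(W t) * γ :=
      (Real.sum_mul_le_sqrt_mul_sqrt _ _ _).trans
        (mul_le_mul_of_nonneg_left (hγ t ht) (sqrt_nonneg _))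
    have hgap_e : lam2 * W t ≤ e t ⬝ᵥ (G.lapMatrix ℝ *ᵥ e t) :=
      hee ▸ zeroSumRayleighInf_mul_dotProduct_le hgap
        (sum_averageDeviation_eq_zero hx hode hinit ht)
    rw [dotProduct_sub, dotProduct_smul, smul_eq_mul]
    nlinarith [mul_le_mul_of_nonneg_left hgap_e hβ.le]
  refine le_of_forall_pos_le_add fun δ hδ =>
    limsup_le_of_le (isCoboundedUnder_le_of_le atTop fun t => abs_nonneg _) ?_
  filter_upwards [eventually_sqrt_le_add_of_hasDerivAt_le ((sqrt_nonneg _).trans (hγ 0 le_rfl))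
    (mul_pos hβ hlam2) hδ (fun t => by positivity)
    (fun t ht => (hasDerivAt_averageDeviation hx hode ht).sum_sq) hW'] with t ht
  exact (abs_le_sqrt
    (Finset.single_le_sum (fun j _ => sq_nonneg (e t j)) (Finset.mem_univ i))).trans ht

end Dynamics

theorem masked_dac_same_ultimate_bound_general
    (N : ℕ) (hN : 3 ≤ N) (G : SimpleGraph (Fin N)) [DecidableRel G.Adj]
    (hconn : G.Connected)
    (L : Matrix (Fin N) (Fin N) ℝ) (hL : L = G.lapMatrix ℝ)
    (lam2 : ℝ)
    (hlam2 : lam2 = sInf {r : ℝ | ∃ v : Fin N → ℝ, v ≠ 0 ∧ (∑ i, v i) = 0 ∧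
        r = (v ⬝ᵥ (L *ᵥ v)) / (v ⬝ᵥ v)})
    (β : ℝ) (hβ : 0 < β)
    (φ : Matrix (Fin N) (Fin N) ℝ)
    (m : Fin N → ℝ) (hm : m = (φ.transpose - φ) *ᵥ (fun _ => (1 : ℝ)))
    (x : ℝ → Fin N → ℝ) (hx : Differentiable ℝ x)
    (γ : ℝ)
    (hγ : IsLUB {r : ℝ | ∃ τ ≥ (0 : ℝ), r = Real.sqrt (∑ i,
        ((((1 : Matrix (Fin N) (Fin N) ℝ)
            - (N : ℝ)⁻¹ • Matrix.of (fun _ _ => (1 : ℝ))) *ᵥ deriv x τ) i) ^ 2)} γ)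
    (xhat : ℝ → Fin N → ℝ)
    (hinit : xhat 0 = x 0 + m)
    (hode : ∀ t ≥ (0 : ℝ), HasDerivAt xhat (deriv x t - β • (L *ᵥ xhat t)) t) :
    ∀ i : Fin N,
      limsup (fun t : ℝ => |xhat t i - (∑ j, x t j) / N|) atTop ≤ γ / (β * lam2) := by
  subst hL hm
  have : Nontrivial (Fin N) := Fin.nontrivial_iff_two_le.2 (by omega)
  have hγ' : ∀ τ ≥ 0, √(∑ i, (centeringMatrix (Fin N) *ᵥ deriv x τ) i ^ 2) ≤ γ := fun τ hτ => by
    rw [centeringMatrix, Fintype.card_fin]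
    exact hγ.1 ⟨τ, hτ, rfl⟩
  have hinit' : ∑ i, xhat 0 i = ∑ i, x 0 i := by
    simp [hinit, Finset.sum_add_distrib, φ.sum_transpose_sub_mulVec_const]
  intro i
  have := hconn.limsup_abs_averageDeviation_le hβ hx hγ' hode hinit' i
  simp only [averageDeviation, Pi.sub_apply, Fintype.card_fin] at this
  rwa [hlam2]

/-- Theorem 1: the privacy-preserving masked DAC algorithm, with mask
`m = (φᵀ − φ)·1` built from offsets `φ` supported on the edges of `G` and masked
initialization `xhat(0) = x(0) + m`, converges to the same bounded `γ/(β·λ₂)`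
neighborhood of the true average as the conventional DAC algorithm. -/
theorem masked_dac_same_ultimate_bound
    (N : ℕ) (hN : 3 ≤ N) (G : SimpleGraph (Fin N)) [DecidableRel G.Adj]
    (hconn : G.Connected)
    (L : Matrix (Fin N) (Fin N) ℝ) (hL : L = G.lapMatrix ℝ)
    (lam2 : ℝ)
    (hlam2 : lam2 = sInf {r : ℝ | ∃ v : Fin N → ℝ, v ≠ 0 ∧ (∑ i, v i) = 0 ∧
        r = (v ⬝ᵥ (L *ᵥ v)) / (v ⬝ᵥ v)})
    (β : ℝ) (hβ : 0 < β)
    (φ : Matrix (Fin N) (Fin N) ℝ)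
    (hφ : ∀ i j, (¬ G.Adj i j ∨ i = j) → φ i j = 0)
    (m : Fin N → ℝ) (hm : m = (φ.transpose - φ) *ᵥ (fun _ => (1 : ℝ)))
    (x : ℝ → Fin N → ℝ) (hx : Differentiable ℝ x)
    (γ : ℝ)
    (hγ : IsLUB {r : ℝ | ∃ τ ≥ (0 : ℝ), r = Real.sqrt (∑ i,
        ((((1 : Matrix (Fin N) (Fin N) ℝ)
            - (N : ℝ)⁻¹ • Matrix.of (fun _ _ => (1 : ℝ))) *ᵥ deriv x τ) i) ^ 2)} γ)
    (xhat : ℝ → Fin N → ℝ)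
    (hinit : xhat 0 = x 0 + m)
    (hode : ∀ t ≥ (0 : ℝ), HasDerivAt xhat (deriv x t - β • (L *ᵥ xhat t)) t) :
    ∀ i : Fin N,
      limsup (fun t : ℝ => |xhat t i - (∑ j, x t j) / N|) atTop ≤ γ / (β * lam2) :=
  masked_dac_same_ultimate_bound_general N hN G hconn L hL lam2 hlam2 β hβ φ m hm x hx γ hγ xhat
    hinit hode
end

section
/- Let G be a connected simple undirected graph on vertex set {1,…,N} with N ≥ 2, let L be its Laplacian, and let λ₂ = inf{ (vᵀLv)/(vᵀv) : v ∈ ℝ^N, v ≠ 0, 1ᵀv = 0 }. Let β > 0, γ ≥ 0, and let e : [0,∞) → ℝ^N be differentiable with 1ᵀe(t) = 0 for all t ≥ 0 and e'(t) = −β·L·e(t) + d(t), where d : [0,∞) → ℝ^N satisfies ‖d(t)‖₂ ≤ γ for all t ≥ 0. Then ‖e(t)‖₂ ≤ e^{−β·λ₂·t}·‖e(0)‖₂ + γ/(β·λ₂) for all t ≥ 0; in particular limsup_{t→∞} ‖e(t)‖₂ ≤ γ/(β·λ₂). -/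
/-!
The Laplacian is coercive on the sum-zero subspace `1ᗮ`: its Rayleigh quotient is scale
invariant, so it attains its infimum `λ₂` on the compact unit sphere of `1ᗮ`, where it is
positive because on a connected graph `vᵀ L v = 0` forces `v` to be constant. Along the
trajectory this gives `⟪e, e'⟫ ≤ -β λ₂ ‖e‖² + γ ‖e‖`. The smoothed norm `φ = √(ε² + ‖e‖²)`
then satisfies `φ' ≤ -β λ₂ φ + γ + β λ₂ ε`, so Grönwall's inequality with the negative rate
`-β λ₂` bounds it; letting `ε → 0` gives the estimate, and the limsup bound follows because
the exponential term decays.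
-/

open Matrix Filter Real

theorem le_exp_mul_add_of_hasDerivAt_le {φ φ' : ℝ → ℝ} {a c : ℝ} (ha : 0 < a) (hc : 0 ≤ c)
    (hφ : ∀ t ≥ 0, HasDerivAt φ (φ' t) t) (hbound : ∀ t ≥ 0, φ' t ≤ -a * φ t + c) :
    ∀ t ≥ 0, φ t ≤ exp (-(a * t)) * φ 0 + c / a := by
  intro t ht
  have hgron := le_gronwallBound_of_liminf_deriv_right_le (f := φ) (f' := φ') (δ := φ 0)
    (fun x hx => (hφ x hx.1).continuousAt.continuousWithinAt)
    (fun x hx r hr => (hφ x hx.1).hasDerivWithinAt.liminf_right_slope_le hr) le_rfl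
    (fun x hx => hbound x hx.1) t ⟨ht, le_rfl⟩
  rw [sub_zero, gronwallBound_of_K_ne_0 (neg_ne_zero.mpr ha.ne')] at hgron
  have hdecay_nonneg : 0 ≤ c / a * exp (-(a * t)) := by positivity
  calc φ t ≤ _ := hgron
    _ = exp (-(a * t)) * φ 0 + c / a - c / a * exp (-(a * t)) := by
      simp only [neg_mul, div_neg]; ring
    _ ≤ _ := by linarith

theorem div_sqrt_sq_add_sq_le {a γ ε x p : ℝ} (ha : 0 < a) (hγ : 0 ≤ γ) (hε : 0 < ε)
    (hp : p ≤ -a * x ^ 2 + γ * x) :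
    p / √(ε ^ 2 + x ^ 2) ≤ -a * √(ε ^ 2 + x ^ 2) + (γ + a * ε) := by
  set s := √(ε ^ 2 + x ^ 2)
  have hs_sq : s ^ 2 = ε ^ 2 + x ^ 2 := sq_sqrt (by positivity)
  have hxs : x ≤ s := le_sqrt_of_sq_le (by nlinarith)
  have hεs : ε ≤ s := le_sqrt_of_sq_le (by nlinarith)
  rw [div_le_iff₀ (hε.trans_le hεs)]
  nlinarith [mul_le_mul_of_nonneg_left hxs hγ, mul_le_mul_of_nonneg_left hεs (mul_pos ha hε).le]

theorem norm_le_exp_mul_add_of_inner_le {E : Type*} [NormedAddCommGroup E]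
    [InnerProductSpace ℝ E] {f f' : ℝ → E} {a γ : ℝ} (ha : 0 < a) (hγ : 0 ≤ γ)
    (hf : ∀ t ≥ 0, HasDerivAt f (f' t) t)
    (hbound : ∀ t ≥ 0, inner ℝ (f t) (f' t) ≤ -a * ‖f t‖ ^ 2 + γ * ‖f t‖) :
    ∀ t ≥ 0, ‖f t‖ ≤ exp (-(a * t)) * ‖f 0‖ + γ / a := by
  intro t ht
  refine le_of_forall_pos_le_add fun δ hδ => ?_
  set ε := δ / 2 with hε_def
  have hε : 0 < ε := by positivity
  -- `‖f‖` is not differentiable where `f` vanishes, so we bound a smoothed norm instead.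
  set φ : ℝ → ℝ := fun τ => √(ε ^ 2 + ‖f τ‖ ^ 2)
  have hφ : ∀ τ ≥ 0, HasDerivAt φ (inner ℝ (f τ) (f' τ) / φ τ) τ := fun τ hτ => by
    convert ((hf τ hτ).norm_sq.const_add (ε ^ 2)).sqrt (by positivity) using 1
    exact (mul_div_mul_left _ _ two_ne_zero).symm
  have hφ_decay := le_exp_mul_add_of_hasDerivAt_le ha (by positivity) hφ
    (fun τ hτ => div_sqrt_sq_add_sq_le ha hγ hε (hbound τ hτ)) t ht
  have hnorm_le : ‖f t‖ ≤ φ t := le_sqrt_of_sq_le (by linarith [sq_nonneg ε])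
  have hφ₀ : φ 0 ≤ ‖f 0‖ + ε :=
    sqrt_le_iff.mpr ⟨by positivity, by nlinarith [norm_nonneg (f 0)]⟩
  have hexp_le : exp (-(a * t)) ≤ 1 := exp_le_one_iff.mpr (by nlinarith)
  have hγε : (γ + a * ε) / a = γ / a + ε := by field_simp
  calc ‖f t‖ ≤ φ t := hnorm_le
    _ ≤ exp (-(a * t)) * (‖f 0‖ + ε) + (γ / a + ε) :=
      hφ_decay.trans (by rw [hγε]; gcongr)
    _ ≤ exp (-(a * t)) * ‖f 0‖ + γ / a + δ := by
      linarith [mul_le_of_le_one_left hε.le hexp_le]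

theorem limsup_le_of_le_exp_mul_add {u : ℝ → ℝ} {a C B : ℝ} (ha : 0 < a) (hu : ∀ t, 0 ≤ u t)
    (hle : ∀ t ≥ 0, u t ≤ exp (-(a * t)) * C + B) : limsup u atTop ≤ B := by
  have hlim : Tendsto (fun t => exp (-(a * t)) * C + B) atTop (nhds B) := by
    simpa using ((tendsto_exp_atBot.comp (tendsto_neg_atTop_atBot.comp
      (tendsto_id.const_mul_atTop ha))).mul_const C).add_const B
  calc limsup u atTop ≤ limsup (fun t => exp (-(a * t)) * C + B) atTop :=
        limsup_le_limsup (eventually_atTop.mpr ⟨0, hle⟩)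
          (isBoundedUnder_of_eventually_ge (.of_forall hu)).isCoboundedUnder_le
          hlim.isBoundedUnder_le
    _ = B := hlim.limsup_eq

def sumZeroSubmodule (n : Type*) [Fintype n] : Submodule ℝ (n → ℝ) where
  carrier := {v | ∑ i, v i = 0}
  add_mem' := by simp_all [Finset.sum_add_distrib]
  zero_mem' := by simp
  smul_mem' := by simp_all [← Finset.mul_sum]

theorem sumZeroSubmodule_ne_bot (n : Type*) [Fintype n] [Nontrivial n] :
    sumZeroSubmodule n ≠ ⊥ := by
  classical
  obtain ⟨i, j, hij⟩ := exists_pair_ne n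
  refine (Submodule.ne_bot_iff _).mpr ⟨Pi.single i 1 - Pi.single j 1, ?_, ?_⟩
  · simp [sumZeroSubmodule]
  · exact fun h => by simpa [hij] using congrFun h i

namespace Matrix

variable {n : Type*} [Fintype n]

noncomputable def rayleighQuotient (A : Matrix n n ℝ) (v : n → ℝ) : ℝ :=
  v ⬝ᵥ (A *ᵥ v) / (v ⬝ᵥ v)

def rayleighQuotients (A : Matrix n n ℝ) (W : Submodule ℝ (n → ℝ)) : Set ℝ :=
  {r | ∃ v, v ≠ 0 ∧ v ∈ W ∧ r = A.rayleighQuotient v}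

theorem rayleighQuotient_smul (A : Matrix n n ℝ) (v : n → ℝ) {c : ℝ} (hc : c ≠ 0) :
    A.rayleighQuotient (c • v) = A.rayleighQuotient v := by
  simp only [rayleighQuotient, mulVec_smul, smul_dotProduct, dotProduct_smul, smul_eq_mul,
    ← mul_assoc]
  exact mul_div_mul_left _ _ (mul_ne_zero hc hc)

theorem continuousOn_rayleighQuotient (A : Matrix n n ℝ) :
    ContinuousOn A.rayleighQuotient {v | v ≠ 0} :=
  ContinuousOn.div (by fun_prop) (by fun_prop) fun _ hv h => hv (dotProduct_self_eq_zero.mp h)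

theorem sInf_rayleighQuotients_pos {A : Matrix n n ℝ} {W : Submodule ℝ (n → ℝ)} (hW : W ≠ ⊥)
    (hA : ∀ v ∈ W, v ≠ 0 → 0 < v ⬝ᵥ (A *ᵥ v)) : 0 < sInf (A.rayleighQuotients W) := by
  set K := (W : Set (n → ℝ)) ∩ Metric.sphere 0 1
  have hK : IsCompact K :=
    (isCompact_sphere 0 1).inter_left (Submodule.closed_of_finiteDimensional W)
  have hK0 : K ⊆ {v | v ≠ 0} := fun v hv => ne_zero_of_mem_unit_sphere ⟨v, hv.2⟩
  have hnormalize : ∀ u ∈ W, u ≠ 0 → ‖u‖⁻¹ • u ∈ K := fun u huW hu =>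
    ⟨W.smul_mem _ huW, by simp [norm_smul, inv_mul_cancel₀ (norm_ne_zero_iff.mpr hu)]⟩
  obtain ⟨v, hvW, hv⟩ := (Submodule.ne_bot_iff W).mp hW
  obtain ⟨w, hwK, hwmin⟩ :=
    hK.exists_isMinOn ⟨_, hnormalize v hvW hv⟩ ((A.continuousOn_rayleighQuotient).mono hK0)
  have hpos : 0 < A.rayleighQuotient w :=
    div_pos (hA w hwK.1 (hK0 hwK)) (by simpa using dotProduct_star_self_pos_iff.mpr (hK0 hwK))
  refine hpos.trans_le (le_csInf ⟨_, v, hv, hvW, rfl⟩ ?_)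
  rintro r ⟨u, hu, huW, rfl⟩
  rw [← A.rayleighQuotient_smul u (inv_ne_zero (norm_ne_zero_iff.mpr hu))]
  exact hwmin (hnormalize u huW hu)

theorem sInf_rayleighQuotients_mul_le {A : Matrix n n ℝ} {W : Submodule ℝ (n → ℝ)}
    (hA : ∀ v ∈ W, 0 ≤ v ⬝ᵥ (A *ᵥ v)) {v : n → ℝ} (hv : v ∈ W) :
    sInf (A.rayleighQuotients W) * (v ⬝ᵥ v) ≤ v ⬝ᵥ (A *ᵥ v) := by
  rcases eq_or_ne v 0 with rfl | hv0
  · simp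
  have hvv : 0 < v ⬝ᵥ v := by simpa using dotProduct_star_self_pos_iff.mpr hv0
  have hbdd : BddBelow (A.rayleighQuotients W) := by
    refine ⟨0, ?_⟩
    rintro r ⟨u, -, huW, rfl⟩
    exact div_nonneg (hA u huW) (by simpa using dotProduct_star_self_nonneg u)
  calc sInf (A.rayleighQuotients W) * (v ⬝ᵥ v) ≤ A.rayleighQuotient v * (v ⬝ᵥ v) :=
        mul_le_mul_of_nonneg_right (csInf_le hbdd ⟨v, hv0, hv, rfl⟩) hvv.le
    _ = v ⬝ᵥ (A *ᵥ v) := div_mul_cancel₀ _ hvv.ne'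

end Matrix

theorem SimpleGraph.Connected.dotProduct_lapMatrix_mulVec_pos_s6 {V : Type*} [Fintype V]
    [DecidableEq V] {G : SimpleGraph V} [DecidableRel G.Adj] (hG : G.Connected) {v : V → ℝ}
    (hv : v ≠ 0) (hsum : ∑ i, v i = 0) : 0 < v ⬝ᵥ (G.lapMatrix ℝ *ᵥ v) := by
  refine (by simpa using (G.posSemidef_lapMatrix ℝ).dotProduct_mulVec_nonneg v :
    0 ≤ v ⬝ᵥ (G.lapMatrix ℝ *ᵥ v)).lt_of_ne fun h => hv ?_
  obtain ⟨i₀⟩ := hG.nonempty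
  have hconst : ∀ i, v i = v i₀ := fun i =>
    (G.lapMatrix_toLinearMap₂'_apply'_eq_zero_iff_forall_reachable v).mp
      (by rw [toLinearMap₂'_apply']; exact h.symm) i i₀ (hG.preconnected i i₀)
  have hv₀ : v i₀ = 0 := by
    simp only [hconst, Finset.sum_const, Finset.card_univ, nsmul_eq_mul] at hsum
    exact (mul_eq_zero.mp hsum).resolve_left
      (Nat.cast_ne_zero.mpr (Fintype.card_pos_iff.mpr ⟨i₀⟩).ne')
  funext i
  rw [hconst i, hv₀, Pi.zero_apply]

section EuclideanSpace

open WithLp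

variable {n : Type*} [Fintype n]

theorem EuclideanSpace.norm_toLp_eq (v : n → ℝ) : ‖toLp 2 v‖ = √(∑ i, v i ^ 2) := by
  simp [EuclideanSpace.norm_eq]

theorem EuclideanSpace.inner_toLp_neg_smul_mulVec_add_le {A : Matrix n n ℝ} {v w : n → ℝ}
    {β lam γ : ℝ} (hβ : 0 ≤ β) (hA : lam * (v ⬝ᵥ v) ≤ v ⬝ᵥ (A *ᵥ v)) (hw : ‖toLp 2 w‖ ≤ γ) :
    inner ℝ (toLp 2 v) (toLp 2 (-(β • (A *ᵥ v)) + w)) ≤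
      -(β * lam) * ‖toLp 2 v‖ ^ 2 + γ * ‖toLp 2 v‖ := by
  have hvv : v ⬝ᵥ v = ‖toLp 2 v‖ ^ 2 := by
    rw [EuclideanSpace.real_norm_sq_eq]
    simp [dotProduct, sq]
  have hcs : w ⬝ᵥ v ≤ ‖toLp 2 v‖ * γ := by
    simpa [EuclideanSpace.inner_toLp_toLp] using
      (real_inner_le_norm (toLp 2 v) (toLp 2 w)).trans
        (mul_le_mul_of_nonneg_left hw (norm_nonneg _))
  rw [EuclideanSpace.inner_toLp_toLp, star_trivial, add_dotProduct, neg_dotProduct,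
    smul_dotProduct, smul_eq_mul, dotProduct_comm (A *ᵥ v), ← hvv]
  linarith [mul_le_mul_of_nonneg_left hA hβ]

end EuclideanSpace

theorem disagreement_error_iss_bound_general
    (N : ℕ) (hN : 2 ≤ N) (G : SimpleGraph (Fin N)) [DecidableRel G.Adj]
    (hconn : G.Connected)
    (L : Matrix (Fin N) (Fin N) ℝ) (hL : L = G.lapMatrix ℝ)
    (lam2 : ℝ)
    (hlam2 : lam2 = sInf {r : ℝ | ∃ v : Fin N → ℝ, v ≠ 0 ∧ (∑ i, v i) = 0 ∧
        r = (v ⬝ᵥ (L *ᵥ v)) / (v ⬝ᵥ v)})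
    (β : ℝ) (hβ : 0 < β) (γ : ℝ) (hγ : 0 ≤ γ)
    (e d : ℝ → Fin N → ℝ)
    (hsum : ∀ t ≥ (0 : ℝ), ∑ i, e t i = 0)
    (hode : ∀ t ≥ (0 : ℝ), HasDerivAt e (-(β • (L *ᵥ e t)) + d t) t)
    (hd : ∀ t ≥ (0 : ℝ), Real.sqrt (∑ i, d t i ^ 2) ≤ γ) :
    (∀ t ≥ (0 : ℝ),
      Real.sqrt (∑ i, e t i ^ 2)
        ≤ Real.exp (-(β * lam2 * t)) * Real.sqrt (∑ i, e 0 i ^ 2) + γ / (β * lam2)) ∧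
    limsup (fun t : ℝ => Real.sqrt (∑ i, e t i ^ 2)) atTop ≤ γ / (β * lam2) := by
  have : Nontrivial (Fin N) := Fin.nontrivial_iff_two_le.mpr hN
  have hL_nonneg : ∀ v, 0 ≤ v ⬝ᵥ (L *ᵥ v) := fun v => by
    simpa [hL] using (G.posSemidef_lapMatrix ℝ).dotProduct_mulVec_nonneg v
  have hlam2_pos : 0 < lam2 := hlam2 ▸ sInf_rayleighQuotients_pos (sumZeroSubmodule_ne_bot _)
    fun v hv hv0 => hL ▸ hconn.dotProduct_lapMatrix_mulVec_pos_s6 hv0 hv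
  have hrayleigh : ∀ v ∈ sumZeroSubmodule (Fin N), lam2 * (v ⬝ᵥ v) ≤ v ⬝ᵥ (L *ᵥ v) :=
    hlam2 ▸ fun v hv => sInf_rayleighQuotients_mul_le (fun u _ => hL_nonneg u) hv
  have hbound := norm_le_exp_mul_add_of_inner_le (f := fun t => WithLp.toLp 2 (e t))
    (mul_pos hβ hlam2_pos) hγ
    (fun t ht => (EuclideanSpace.equiv (Fin N) ℝ).symm.hasFDerivAt.comp_hasDerivAt t (hode t ht))
    (fun t ht => EuclideanSpace.inner_toLp_neg_smul_mulVec_add_le hβ.le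
      (hrayleigh _ (hsum t ht)) ((EuclideanSpace.norm_toLp_eq _).trans_le (hd t ht)))
  simp only [EuclideanSpace.norm_toLp_eq] at hbound
  exact ⟨hbound, limsup_le_of_le_exp_mul_add (mul_pos hβ hlam2_pos) (fun _ => sqrt_nonneg _)
    hbound⟩

/-- input-to-state error bound for the disagreement dynamics
`e' = −β·L·e + d` with `1ᵀe(t) = 0` and `‖d(t)‖₂ ≤ γ`:
`‖e(t)‖₂ ≤ exp(−β·λ₂·t)·‖e(0)‖₂ + γ/(β·λ₂)` for all `t ≥ 0`, hence
`limsup_{t→∞} ‖e(t)‖₂ ≤ γ/(β·λ₂)`. -/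
theorem disagreement_error_iss_bound
    (N : ℕ) (hN : 2 ≤ N) (G : SimpleGraph (Fin N)) [DecidableRel G.Adj]
    (hconn : G.Connected)
    (L : Matrix (Fin N) (Fin N) ℝ) (hL : L = G.lapMatrix ℝ)
    (lam2 : ℝ)
    (hlam2 : lam2 = sInf {r : ℝ | ∃ v : Fin N → ℝ, v ≠ 0 ∧ (∑ i, v i) = 0 ∧
        r = (v ⬝ᵥ (L *ᵥ v)) / (v ⬝ᵥ v)})
    (β : ℝ) (hβ : 0 < β) (γ : ℝ) (hγ : 0 ≤ γ)
    (e d : ℝ → Fin N → ℝ)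
    (he : Differentiable ℝ e)
    (hsum : ∀ t ≥ (0 : ℝ), ∑ i, e t i = 0)
    (hode : ∀ t ≥ (0 : ℝ), HasDerivAt e (-(β • (L *ᵥ e t)) + d t) t)
    (hd : ∀ t ≥ (0 : ℝ), Real.sqrt (∑ i, d t i ^ 2) ≤ γ) :
    (∀ t ≥ (0 : ℝ),
      Real.sqrt (∑ i, e t i ^ 2)
        ≤ Real.exp (-(β * lam2 * t)) * Real.sqrt (∑ i, e 0 i ^ 2) + γ / (β * lam2)) ∧
    limsup (fun t : ℝ => Real.sqrt (∑ i, e t i ^ 2)) atTop ≤ γ / (β * lam2) :=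
  disagreement_error_iss_bound_general N hN G hconn L hL lam2 hlam2 β hβ γ hγ e d hsum hode hd
end
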